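/- arXiv:2005.04123 — 3 statements merged into one kernel-verified Lean document; each statement's English description precedes it below -/
import Mathlib

section
/- Forgetting is transitive: if B expresses forgetting the variables Y from A, and C expresses forgetting the variables Z from B, then C expresses forgetting Y ∪ Z from A. -/
abbrev Lit : Type := ℕ × Bool
abbrev Clause : Type := Finset Lit
abbrev Cnf : Type := Finset Clause

def Lit.negate (l : Lit) : Lit := (l.1, !l.2)

def litSat (M : ℕ → Bool) (l : Lit) : Prop := M l.1 = l.2

def clauseSat (M : ℕ → Bool) (c : Clause) : Prop := ∃ l ∈ c, litSat M l

def cnfSat (M : ℕ → Bool) (F : Cnf) : Prop := ∀ c ∈ F, clauseSat M c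

def ClTaut (c : Clause) : Prop := ∃ v : ℕ, (v, true) ∈ c ∧ (v, false) ∈ c

def cnfVars (F : Cnf) : Set ℕ := {v | ∃ c ∈ F, ∃ b, (v, b) ∈ c}

inductive PropForm : Type
  | tru : PropForm
  | fls : PropForm
  | var : ℕ → PropForm
  | neg : PropForm → PropForm
  | conj : PropForm → PropForm → PropForm
  | disj : PropForm → PropForm → PropForm

def PropForm.eval (M : ℕ → Bool) : PropForm → Bool
  | .tru => true
  | .fls => false
  | .var n => M n
  | .neg φ => !(PropForm.eval M φ)
  | .conj φ ψ => PropForm.eval M φ && PropForm.eval M ψ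
  | .disj φ ψ => PropForm.eval M φ || PropForm.eval M ψ

def PropForm.vars : PropForm → Set ℕ
  | .tru => ∅
  | .fls => ∅
  | .var n => {n}
  | .neg φ => PropForm.vars φ
  | .conj φ ψ => PropForm.vars φ ∪ PropForm.vars ψ
  | .disj φ ψ => PropForm.vars φ ∪ PropForm.vars ψ

def entailsForm (A : Cnf) (φ : PropForm) : Prop :=
  ∀ M, cnfSat M A → PropForm.eval M φ = true

/-- `B` expresses forgetting all variables but `Y` from `A`. -/
def ForgetExpr (A : Cnf) (Y : Set ℕ) (B : Cnf) : Prop :=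
  cnfVars B ⊆ Y ∧
    ∀ φ : PropForm, PropForm.vars φ ⊆ Y → (entailsForm A φ ↔ entailsForm B φ)

def litSetSat (M : ℕ → Bool) (S : Set Lit) : Prop := ∀ l ∈ S, litSat M l

/-!
A formula `φ` over `Var A \ (Y ∪ Z)` is entailed by `A` iff by `B`, by the first hypothesis.
It need not be a formula over `Var B \ Z`, yet `B` and `C` still agree on it: every model `M`
of `C` can be turned into a model of `B` by changing only variables of `B` that lie in `Z`, since
otherwise `B` would entail the negated cube of `M` on `Var B \ Z`, which `M` falsifies although
it is a model of `C`. The models of `B` obtained this way agree with `M` on `φ`.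
-/

namespace PropForm

def lit : Lit → PropForm
  | (v, true) => var v
  | (v, false) => neg (var v)

def conjList (L : List PropForm) : PropForm := L.foldr conj tru

def disjList (L : List PropForm) : PropForm := L.foldr disj fls

noncomputable def ofCnf (F : Cnf) : PropForm :=
  conjList (F.toList.map fun c => disjList (c.toList.map lit))

noncomputable def cube (M : ℕ → Bool) (s : Finset ℕ) : PropForm :=
  conjList (s.toList.map fun v => lit (v, M v))

theorem eval_lit (M : ℕ → Bool) (l : Lit) : (lit l).eval M = true ↔ litSat M l := by
  obtain ⟨v, _ | _⟩ := l <;> simp [lit, eval, litSat]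

theorem vars_lit (l : Lit) : (lit l).vars = {l.1} := by
  obtain ⟨v, _ | _⟩ := l <;> rfl

theorem eval_conjList (M : ℕ → Bool) (L : List PropForm) :
    (conjList L).eval M = true ↔ ∀ φ ∈ L, φ.eval M = true := by
  induction L with
  | nil => simp [conjList, eval]
  | cons φ L ih => simp [conjList, eval, ← ih]

theorem eval_disjList (M : ℕ → Bool) (L : List PropForm) :
    (disjList L).eval M = true ↔ ∃ φ ∈ L, φ.eval M = true := by
  induction L with
  | nil => simp [disjList, eval]
  | cons φ L ih => simp [disjList, eval, ← ih]

theorem vars_conjList (L : List PropForm) : (conjList L).vars = ⋃ φ ∈ L, φ.vars := by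
  induction L with
  | nil => simp [conjList, vars]
  | cons φ L ih => simp [conjList, vars, ← ih]

theorem vars_disjList (L : List PropForm) : (disjList L).vars = ⋃ φ ∈ L, φ.vars := by
  induction L with
  | nil => simp [disjList, vars]
  | cons φ L ih => simp [disjList, vars, ← ih]

theorem eval_ofCnf (M : ℕ → Bool) (F : Cnf) : (ofCnf F).eval M = true ↔ cnfSat M F := by
  simp only [ofCnf, eval_conjList, eval_disjList, List.mem_map, Finset.mem_toList,
    forall_exists_index, and_imp, forall_apply_eq_imp_iff₂, exists_exists_and_eq_and, eval_lit]
  rfl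

theorem vars_ofCnf (F : Cnf) : (ofCnf F).vars = cnfVars F := by
  ext v
  simp only [ofCnf, vars_conjList, vars_disjList, List.mem_map, Finset.mem_toList,
    Set.iUnion_exists, Set.biUnion_and', Set.iUnion_iUnion_eq_right, vars_lit, Set.mem_iUnion,
    Set.mem_singleton_iff]
  constructor
  · rintro ⟨c, hc, ⟨w, b⟩, hl, rfl⟩
    exact ⟨c, hc, b, hl⟩
  · rintro ⟨c, hc, b, hl⟩
    exact ⟨c, hc, (v, b), hl, rfl⟩

theorem eval_cube (M N : ℕ → Bool) (s : Finset ℕ) :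
    (cube M s).eval N = true ↔ Set.EqOn N M s := by
  simp [cube, eval_conjList, eval_lit, litSat, Set.EqOn]

theorem vars_cube (M : ℕ → Bool) (s : Finset ℕ) : (cube M s).vars = s := by
  ext v
  simp [cube, vars_conjList, vars_lit]

theorem eval_congr {M N : ℕ → Bool} (φ : PropForm) (h : Set.EqOn M N φ.vars) :
    φ.eval M = φ.eval N := by
  induction φ with
  | tru | fls => rfl
  | var n => exact h rfl
  | neg φ ih => simp only [eval, ih h]
  | conj φ ψ ihφ ihψ | disj φ ψ ihφ ihψ =>
    simp only [eval, ihφ (h.mono Set.subset_union_left), ihψ (h.mono Set.subset_union_right)]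

end PropForm

open PropForm

theorem cnfVars_finite (F : Cnf) : (cnfVars F).Finite := by
  refine (F.biUnion fun c => c.image Prod.fst).finite_toSet.subset ?_
  rintro v ⟨c, hc, b, hb⟩
  simp only [Finset.coe_biUnion, Finset.coe_image, Set.mem_iUnion, Set.mem_image]
  exact ⟨c, hc, (v, b), hb, rfl⟩

theorem cnfSat_congr {M N : ℕ → Bool} {F : Cnf} (h : Set.EqOn M N (cnfVars F)) :
    cnfSat M F ↔ cnfSat N F := by
  rw [← eval_ofCnf, ← eval_ofCnf, eval_congr _ (by rwa [vars_ofCnf])]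

namespace ForgetExpr

variable {B C : Cnf} {V : Set ℕ}

theorem cnfSat_of_cnfSat {M : ℕ → Bool} (h : ForgetExpr B V C) (hM : cnfSat M B) :
    cnfSat M C := by
  have hBC : entailsForm B (ofCnf C) :=
    (h.2 _ ((vars_ofCnf C).trans_subset h.1)).2 fun N hN => (eval_ofCnf N C).2 hN
  exact (eval_ofCnf M C).1 (hBC M hM)

theorem exists_cnfSat_eqOn {M : ℕ → Bool} (h : ForgetExpr B V C) (hM : cnfSat M C) :
    ∃ N, cnfSat N B ∧ Set.EqOn N M (V ∪ (cnfVars B)ᶜ) := by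
  classical
  set s := ((cnfVars_finite B).inter_of_left V).toFinset
  have hs : (↑s : Set ℕ) ⊆ V := by simp [s]
  obtain ⟨N, hNB, hNM⟩ : ∃ N, cnfSat N B ∧ (cube M s).eval N = true := by
    by_contra! hB
    have hC : entailsForm C (neg (cube M s)) :=
      (h.2 (neg (cube M s)) ((vars_cube M s).trans_subset hs)).1 fun N hN => by
        simpa [eval] using hB N hN
    simpa [eval, (eval_cube M M s).2 (Set.eqOn_refl M s)] using hC M hM
  refine ⟨(cnfVars B).piecewise N M,
    (cnfSat_congr (Set.piecewise_eqOn (cnfVars B) N M)).2 hNB, ?_⟩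
  rintro v (hv | hv)
  · by_cases hvB : v ∈ cnfVars B
    · rw [Set.piecewise_eq_of_mem _ _ _ hvB]
      exact (eval_cube M N s).1 hNM (by simp [s, hv, hvB])
    · exact Set.piecewise_eq_of_notMem _ _ _ hvB
  · exact Set.piecewise_eq_of_notMem _ _ _ hv

theorem entailsForm_iff {φ : PropForm} (h : ForgetExpr B V C) (hφ : φ.vars ∩ cnfVars B ⊆ V) :
    entailsForm B φ ↔ entailsForm C φ := by
  refine ⟨fun hB M hM => ?_, fun hC M hM => hC M (h.cnfSat_of_cnfSat hM)⟩
  obtain ⟨N, hNB, hNM⟩ := h.exists_cnfSat_eqOn hM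
  have hφN : Set.EqOn N M φ.vars := hNM.mono fun v hv => by
    by_cases hvB : v ∈ cnfVars B
    exacts [Or.inl (hφ ⟨hv, hvB⟩), Or.inr hvB]
  rw [← eval_congr φ hφN]
  exact hB N hNB

end ForgetExpr

/-- Transitivity of forgetting: if `B` expresses forgetting `Y` from `A` and
`C` expresses forgetting `Z` from `B`, then `C` expresses forgetting
`Y ∪ Z` from `A`. -/
theorem stmt5 (A B C : Cnf) (Y Z : Set ℕ)
    (hAB : ForgetExpr A (cnfVars A \ Y) B)
    (hBC : ForgetExpr B (cnfVars B \ Z) C) :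
    ForgetExpr A (cnfVars A \ (Y ∪ Z)) C := by
  refine ⟨fun v hv => ?_, fun φ hφ => ?_⟩
  · obtain ⟨hvB, hvZ⟩ := hBC.1 hv
    obtain ⟨hvA, hvY⟩ := hAB.1 hvB
    exact ⟨hvA, by simp [hvY, hvZ]⟩
  · have hφY : φ.vars ⊆ cnfVars A \ Y :=
      hφ.trans (Set.sdiff_subset_sdiff_right Set.subset_union_left)
    have hφZ : φ.vars ∩ cnfVars B ⊆ cnfVars B \ Z :=
      fun v hv => ⟨hv.2, fun hvZ => (hφ hv.1).2 (Or.inr hvZ)⟩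
    rw [hAB.2 φ hφY, hBC.entailsForm_iff hφZ]
end

section
/- For a propositional variable x and CNF formula A, the formula obtained from A by removing all clauses containing x or ¬x and adding all non-tautological resolvents of a clause of A containing x with a clause of A containing ¬x expresses forgetting x from A. -/
def isResolvent (c1 c2 r : Clause) (v : ℕ) : Prop :=
  (v, true) ∈ c1 ∧ (v, false) ∈ c2 ∧
    r = c1.erase (v, true) ∪ c2.erase (v, false)

open Function

theorem PropForm.eval_congr_s6 (φ : PropForm) {M M' : ℕ → Bool} (h : ∀ v ∈ φ.vars, M v = M' v) :
    φ.eval M = φ.eval M' := by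
  induction φ with
  | tru | fls => rfl
  | var n => exact h n rfl
  | neg ψ ih => simp only [PropForm.eval, ih h]
  | conj ψ χ ih₁ ih₂ | disj ψ χ ih₁ ih₂ =>
    simp only [PropForm.eval, ih₁ fun v hv => h v (Or.inl hv), ih₂ fun v hv => h v (Or.inr hv)]

theorem PropForm.eval_update_of_notMem {φ : PropForm} {x : ℕ} (hx : x ∉ φ.vars)
    (M : ℕ → Bool) (b : Bool) : φ.eval (update M x b) = φ.eval M :=
  φ.eval_congr_s6 fun _ hv => update_of_ne (ne_of_mem_of_not_mem hv hx) _ _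

theorem litSat_update_of_ne {l : Lit} {x : ℕ} (h : l.1 ≠ x) (M : ℕ → Bool) (b : Bool) :
    litSat (update M x b) l ↔ litSat M l := by
  simp [litSat, update_of_ne h]

theorem litSat_update_self {x : ℕ} {b b' : Bool} (M : ℕ → Bool) :
    litSat (update M x b) (x, b') ↔ b = b' := by
  simp [litSat]

theorem clauseSat.mono {M : ℕ → Bool} {c d : Clause} (h : c ⊆ d) : clauseSat M c → clauseSat M d :=
  fun ⟨l, hl, hsat⟩ => ⟨l, h hl, hsat⟩

theorem clauseSat_union {M : ℕ → Bool} {c d : Clause} :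
    clauseSat M (c ∪ d) ↔ clauseSat M c ∨ clauseSat M d := by
  simp only [clauseSat, Finset.mem_union, or_and_right, exists_or]

theorem clauseSat_of_clTaut {c : Clause} (hc : ClTaut c) (M : ℕ → Bool) : clauseSat M c := by
  obtain ⟨v, ht, hf⟩ := hc
  cases hv : M v
  · exact ⟨(v, false), hf, hv⟩
  · exact ⟨(v, true), ht, hv⟩

theorem clauseSat_update_iff {c : Clause} {x : ℕ} (hc : ∀ b, (x, b) ∉ c) (M : ℕ → Bool)
    (b : Bool) : clauseSat (update M x b) c ↔ clauseSat M c := by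
  refine exists_congr fun l => and_congr_right fun hl => litSat_update_of_ne ?_ M b
  rintro hlx
  exact hc l.2 (hlx ▸ hl)

theorem clauseSat_of_isResolvent {M : ℕ → Bool} {c₁ c₂ r : Clause} {v : ℕ}
    (hr : isResolvent c₁ c₂ r v) (h₁ : clauseSat M c₁) (h₂ : clauseSat M c₂) :
    clauseSat M r := by
  obtain ⟨-, -, rfl⟩ := hr
  obtain ⟨l₁, hl₁, hsat₁⟩ := h₁
  obtain ⟨l₂, hl₂, hsat₂⟩ := h₂
  by_cases hne : l₁ = (v, true)
  · refine ⟨l₂, Finset.mem_union_right _ (Finset.mem_erase.mpr ⟨?_, hl₂⟩), hsat₂⟩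
    rintro rfl
    subst hne
    exact Bool.false_ne_true (hsat₂.symm.trans hsat₁)
  · exact ⟨l₁, Finset.mem_union_left _ (Finset.mem_erase.mpr ⟨hne, hl₁⟩), hsat₁⟩

theorem isResolvent.mem_of_mem {c₁ c₂ r : Clause} {v : ℕ} (hr : isResolvent c₁ c₂ r v)
    (h₁ : ¬ ClTaut c₁) (h₂ : ¬ ClTaut c₂) {l : Lit} (hl : l ∈ r) :
    l.1 ≠ v ∧ (l ∈ c₁ ∨ l ∈ c₂) := by
  obtain ⟨hv₁, hv₂, rfl⟩ := hr
  obtain ⟨w, b⟩ := l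
  rcases Finset.mem_union.mp hl with h | h <;> obtain ⟨hne, hmem⟩ := Finset.mem_erase.mp h
  · refine ⟨?_, Or.inl hmem⟩
    rintro rfl
    cases b
    · exact h₁ ⟨w, hv₁, hmem⟩
    · exact hne rfl
  · refine ⟨?_, Or.inr hmem⟩
    rintro rfl
    cases b
    · exact hne rfl
    · exact h₂ ⟨w, hmem, hv₂⟩

def resolveOut (A : Cnf) (x : ℕ) : Set Clause :=
  ((↑A : Set Clause) \ {c : Clause | (x, true) ∈ c ∨ (x, false) ∈ c}) ∪
    {r : Clause | ∃ c₁ ∈ A, ∃ c₂ ∈ A, isResolvent c₁ c₂ r x ∧ ¬ ClTaut r}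

namespace resolveOut

variable {A : Cnf} {x : ℕ}

theorem mem_of_mem {c : Clause} (hc : c ∈ A) (ht : (x, true) ∉ c) (hf : (x, false) ∉ c) :
    c ∈ resolveOut A x :=
  Or.inl ⟨hc, by simp [ht, hf]⟩

theorem mem_of_isResolvent {c₁ c₂ r : Clause} (h₁ : c₁ ∈ A) (h₂ : c₂ ∈ A)
    (hr : isResolvent c₁ c₂ r x) (hrt : ¬ ClTaut r) : r ∈ resolveOut A x :=
  Or.inr ⟨c₁, h₁, c₂, h₂, hr, hrt⟩

theorem clauseSat_of_cnfSat {M : ℕ → Bool} (hM : cnfSat M A) {c : Clause}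
    (hc : c ∈ resolveOut A x) : clauseSat M c := by
  rcases hc with ⟨hcA, -⟩ | ⟨c₁, h₁, c₂, h₂, hr, -⟩
  · exact hM c hcA
  · exact clauseSat_of_isResolvent hr (hM c₁ h₁) (hM c₂ h₂)

theorem var_mem (hA : ∀ c ∈ A, ¬ ClTaut c) {c : Clause} (hc : c ∈ resolveOut A x) {v : ℕ}
    {b : Bool} (hv : (v, b) ∈ c) : v ∈ cnfVars A \ {x} := by
  rcases hc with ⟨hcA, hcx⟩ | ⟨c₁, h₁, c₂, h₂, hr, -⟩
  · refine ⟨⟨c, hcA, b, hv⟩, ?_⟩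
    rintro rfl
    cases b
    · exact hcx (Or.inr hv)
    · exact hcx (Or.inl hv)
  · obtain ⟨hvx, hmem | hmem⟩ := hr.mem_of_mem (hA c₁ h₁) (hA c₂ h₂) hv
    · exact ⟨⟨c₁, h₁, b, hmem⟩, hvx⟩
    · exact ⟨⟨c₂, h₂, b, hmem⟩, hvx⟩

/-- The resolvent of `c` and `c₁` is tautological or in `resolveOut A x`; either way
`update M x false` satisfies it, and not through a literal of `c₁`. -/
theorem clauseSat_update_false {M : ℕ → Bool} (hM : ∀ c ∈ resolveOut A x, clauseSat M c)
    {c₁ : Clause} (h₁ : c₁ ∈ A) (hc₁ : ¬ clauseSat (update M x true) c₁)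
    {c : Clause} (hc : c ∈ A) (ht : (x, true) ∈ c) (hf : (x, false) ∉ c) :
    clauseSat (update M x false) c := by
  have hxt₁ : (x, true) ∉ c₁ := fun h => hc₁ ⟨_, h, (litSat_update_self M).mpr rfl⟩
  have hxf₁ : (x, false) ∈ c₁ := by
    by_contra hxf₁
    exact hc₁ ((clauseSat_update_iff (by rintro (_ | _) <;> assumption) M true).mpr
      (hM c₁ (mem_of_mem h₁ hxt₁ hxf₁)))
  have hrest : ¬ clauseSat (update M x false) (c₁.erase (x, false)) := by
    rintro ⟨l, hl, hsat⟩
    obtain ⟨hne, hl₁⟩ := Finset.mem_erase.mp hl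
    by_cases hlx : l.1 = x
    · exact hne (Prod.ext hlx (by rw [litSat, hlx, update_self] at hsat; exact hsat.symm))
    · exact hc₁ ⟨l, hl₁, (litSat_update_of_ne hlx M true).mpr
        ((litSat_update_of_ne hlx M false).mp hsat)⟩
  set r := c.erase (x, true) ∪ c₁.erase (x, false) with hr
  have hrsat : clauseSat (update M x false) r := by
    by_cases hrt : ClTaut r
    · exact clauseSat_of_clTaut hrt _
    have hrx : ∀ b, (x, b) ∉ r := by
      rintro (_ | _) hmem <;> rcases Finset.mem_union.mp hmem with h | h <;>
        simp_all [Finset.mem_erase]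
    exact (clauseSat_update_iff hrx M false).mpr
      (hM r (mem_of_isResolvent hc h₁ ⟨ht, hxf₁, hr⟩ hrt))
  rcases clauseSat_union.mp hrsat with h | h
  · exact h.mono (Finset.erase_subset _ _)
  · exact absurd h hrest

theorem exists_update_cnfSat {M : ℕ → Bool} (hM : ∀ c ∈ resolveOut A x, clauseSat M c) :
    ∃ b, cnfSat (update M x b) A := by
  by_cases htrue : cnfSat (update M x true) A
  · exact ⟨true, htrue⟩
  obtain ⟨c₁, h₁, hc₁⟩ := not_forall₂.mp htrue
  refine ⟨false, fun c hc => ?_⟩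
  by_cases hf : (x, false) ∈ c
  · exact ⟨_, hf, (litSat_update_self M).mpr rfl⟩
  by_cases ht : (x, true) ∈ c
  · exact clauseSat_update_false hM h₁ hc₁ hc ht hf
  · exact (clauseSat_update_iff (by rintro (_ | _) <;> assumption) M false).mpr
      (hM c (mem_of_mem hc ht hf))

end resolveOut

/-- The formula obtained from `A` by dropping all clauses mentioning `x` and
adding all non-tautological resolvents on `x` expresses forgetting `x`
from `A`. -/
theorem stmt6 (A B : Cnf) (x : ℕ)
    (hA : ∀ c ∈ A, ¬ ClTaut c)
    (hB : (↑B : Set Clause) =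
      ((↑A : Set Clause) \ {c : Clause | (x, true) ∈ c ∨ (x, false) ∈ c}) ∪
        {r : Clause | ∃ c1 ∈ A, ∃ c2 ∈ A, isResolvent c1 c2 r x ∧ ¬ ClTaut r}) :
    ForgetExpr A (cnfVars A \ {x}) B := by
  have hmem : ∀ c, c ∈ B ↔ c ∈ resolveOut A x := fun c => by
    rw [← Finset.mem_coe, hB, resolveOut]
  refine ⟨fun v ⟨c, hc, b, hv⟩ => resolveOut.var_mem hA ((hmem c).mp hc) hv, fun φ hφ => ?_⟩
  have hxφ : x ∉ φ.vars := fun h => (hφ h).2 rfl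
  constructor
  · intro hAφ M hMB
    obtain ⟨b, hMA⟩ := resolveOut.exists_update_cnfSat fun c hc => hMB c ((hmem c).mpr hc)
    rw [← PropForm.eval_update_of_notMem hxφ M b]
    exact hAφ _ hMA
  · exact fun hBφ M hMA =>
      hBφ M fun c hc => resolveOut.clauseSat_of_cnfSat hMA ((hmem c).mp hc)
end

section
/- If the literal ¬l does not occur in any clause of F and l ∉ F, then the unit clause {l} is superredundant in F ∪ {l} if and only if F ⊨ l. -/
inductive Deriv (F : Set Clause) : Clause → Prop
  | base {c : Clause} : c ∈ F → Deriv F c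
  | step {c1 c2 r : Clause} {v : ℕ} : Deriv F c1 → Deriv F c2 →
      isResolvent c1 c2 r v → ¬ ClTaut r → Deriv F r

def ResCn (F : Set Clause) : Set Clause := {c | Deriv F c}

def setSat (M : ℕ → Bool) (S : Set Clause) : Prop := ∀ c ∈ S, clauseSat M c

def setEntails (S : Set Clause) (c : Clause) : Prop :=
  ∀ M, setSat M S → clauseSat M c

def superRedundant (F : Cnf) (c : Clause) : Prop :=
  setEntails (ResCn ↑F \ {c}) c

def cnfSize (F : Cnf) : ℕ := ∑ c ∈ F, c.card

def cnfEquiv (F G : Cnf) : Prop := ∀ M, cnfSat M F ↔ cnfSat M G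

theorem setEntails.mono {S T : Set Clause} {c : Clause} (hST : S ⊆ T) (h : setEntails S c) :
    setEntails T c :=
  fun M hM => h M fun d hd => hM d (hST hd)

theorem Deriv.clauseSat {S : Set Clause} {M : ℕ → Bool} (hM : setSat M S) {c : Clause}
    (hd : Deriv S c) : clauseSat M c := by
  induction hd with
  | base hc => exact hM _ hc
  | @step c1 c2 r v _ _ hres _ ih1 ih2 =>
    obtain ⟨h1, h2, rfl⟩ := hres
    by_cases hv : M v = true
    · obtain ⟨m, hm, hMm⟩ := ih2
      refine ⟨m, Finset.mem_union_right _ (Finset.mem_erase.mpr ⟨?_, hm⟩), hMm⟩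
      rintro rfl
      simp [litSat, hv] at hMm
    · obtain ⟨m, hm, hMm⟩ := ih1
      refine ⟨m, Finset.mem_union_left _ (Finset.mem_erase.mpr ⟨?_, hm⟩), hMm⟩
      rintro rfl
      exact hv hMm

theorem setEntails_resCn_iff {S : Set Clause} {c : Clause} :
    setEntails (ResCn S) c ↔ setEntails S c :=
  ⟨fun h M hM => h M fun _ hd => Deriv.clauseSat hM hd,
    setEntails.mono fun _ hd => Deriv.base hd⟩

theorem Deriv.not_mem {S : Set Clause} {x : Lit} (hS : ∀ d ∈ S, x ∉ d) {c : Clause}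
    (hd : Deriv S c) : x ∉ c := by
  induction hd with
  | base hc => exact hS _ hc
  | step _ _ hres _ ih1 ih2 =>
    obtain ⟨-, -, rfl⟩ := hres
    simp only [Finset.mem_union, Finset.mem_erase, not_or, not_and]
    exact ⟨fun _ hx => ih1 hx, fun _ hx => ih2 hx⟩

theorem Lit.negate_ne (l : Lit) : l.negate ≠ l := by
  simp [Lit.negate, Prod.ext_iff]

theorem Deriv.eq_unit_or_deriv_of_insert_unit {S : Set Clause} {l : Lit}
    (hS : ∀ d ∈ S, l.negate ∉ d) {c : Clause} (hd : Deriv (insert {l} S) c) :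
    c = {l} ∨ Deriv S c := by
  induction hd with
  | base hc => exact hc.imp id Deriv.base
  | @step c1 c2 r v _ _ hres hnt ih1 ih2 =>
    obtain ⟨h1, h2, hr⟩ := hres
    have hnot : ∀ {d}, d = {l} ∨ Deriv S d → l.negate ∉ d := by
      rintro d (rfl | hd)
      · simpa using l.negate_ne
      · exact hd.not_mem hS
    rcases ih1 with rfl | hd1
    · obtain rfl := (Finset.mem_singleton.mp h1).symm
      exact absurd h2 (hnot ih2)
    rcases ih2 with rfl | hd2
    · obtain rfl := (Finset.mem_singleton.mp h2).symm
      exact absurd h1 (hnot (.inr hd1))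
    exact .inr (hd1.step hd2 ⟨h1, h2, hr⟩ hnt)

theorem resCn_insert_unit_diff_subset {S : Set Clause} {l : Lit}
    (hS : ∀ d ∈ S, l.negate ∉ d) : ResCn (insert {l} S) \ {{l}} ⊆ ResCn S :=
  fun _ ⟨hd, hne⟩ => (Deriv.eq_unit_or_deriv_of_insert_unit hS hd).resolve_left hne

theorem subset_resCn_insert_unit_diff {S : Set Clause} {l : Lit} (hl : {l} ∉ S) :
    S ⊆ ResCn (insert {l} S) \ {{l}} :=
  fun _ hc => ⟨Deriv.base (Set.mem_insert_of_mem _ hc), by rintro rfl; exact hl hc⟩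

theorem stmt17_general (F : Cnf) (l : Lit)
    (hneg : ∀ c ∈ F, Lit.negate l ∉ c)
    (hnotin : ({l} : Clause) ∉ F) :
    superRedundant (insert ({l} : Clause) F) ({l} : Clause) ↔
      setEntails (↑F) ({l} : Clause) := by
  rw [superRedundant, Finset.coe_insert]
  constructor
  · intro h
    exact setEntails_resCn_iff.mp (h.mono (resCn_insert_unit_diff_subset hneg))
  · exact setEntails.mono (subset_resCn_insert_unit_diff hnotin)

/-- If `¬l` does not occur in `F` and the unit clause `{l}` is not in `F`, then
`{l}` is superredundant in `F ∪ {l}` iff `F ⊨ l`. -/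
theorem stmt17 (F : Cnf) (l : Lit)
    (hNT : ∀ c ∈ F, ¬ ClTaut c)
    (hneg : ∀ c ∈ F, Lit.negate l ∉ c)
    (hnotin : ({l} : Clause) ∉ F) :
    superRedundant (insert ({l} : Clause) F) ({l} : Clause) ↔
      setEntails (↑F) ({l} : Clause) :=
  stmt17_general F l hneg hnotin
end
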